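/- arXiv:2412.17117 — 9 statements merged into one kernel-verified Lean document; each statement's English description precedes it below -/
import Mathlib

section
/- Let c, τ ∈ ℝ with τ > 0 and 1 + cτ ≠ 0. Suppose ũ, ṽ, w̃ : ℝ → ℝ are differentiable and satisfy, for all ξ ∈ ℝ, −c·ũ′(ξ) + w̃′(ξ) + ũ(ξ)·ũ′(ξ) = 0, −cτ·ṽ′(ξ) = ṽ′(ξ) − w̃(ξ), and −cτ·w̃′(ξ) = −ũ′(ξ) + ṽ(ξ), and that ũ(ξ) → 0 and w̃(ξ) → 0 as ξ → −∞. Then for all ξ ∈ ℝ: w̃(ξ) = c·ũ(ξ) − ũ(ξ)²/2, ũ′(ξ)·(1 + cτ(ũ(ξ) − c)) = ṽ(ξ), and ṽ′(ξ) = (c − ũ(ξ)/2)·ũ(ξ)/(1 + cτ). -/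
open Filter

/-- Traveling-wave reduction of the hyperbolized KdV system: if the profiles
`u, v, w` satisfy the traveling-wave ODE system and `u, w` vanish at `-∞`,
then `w = c u - u²/2` and the first-order system for `(u, v)` holds. -/
theorem kdvh_traveling_wave_reduction (c τ : ℝ) (hτ : 0 < τ) (hcτ : 1 + c * τ ≠ 0)
    (u v w : ℝ → ℝ)
    (hu : Differentiable ℝ u) (hv : Differentiable ℝ v) (hw : Differentiable ℝ w)
    (h1 : ∀ ξ : ℝ, -c * deriv u ξ + deriv w ξ + u ξ * deriv u ξ = 0)
    (h2 : ∀ ξ : ℝ, -(c * τ) * deriv v ξ = deriv v ξ - w ξ)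
    (h3 : ∀ ξ : ℝ, -(c * τ) * deriv w ξ = -deriv u ξ + v ξ)
    (hu0 : Tendsto u atBot (nhds 0)) (hw0 : Tendsto w atBot (nhds 0)) :
    ∀ ξ : ℝ,
      w ξ = c * u ξ - (u ξ) ^ 2 / 2 ∧
      deriv u ξ * (1 + c * τ * (u ξ - c)) = v ξ ∧
      deriv v ξ = (c - u ξ / 2) * u ξ / (1 + c * τ) := by
  set F : ℝ → ℝ := fun ξ => w ξ - c * u ξ + (u ξ) ^ 2 / 2 with hF
  have hFdiff : Differentiable ℝ F := by
    apply Differentiable.add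
    · exact hw.sub ((differentiable_const c).mul hu)
    · exact (hu.pow 2).div_const 2
  have hFderiv : ∀ ξ, deriv F ξ = 0 := by
    intro ξ
    have hd : HasDerivAt F (deriv w ξ - c * deriv u ξ + 2 * u ξ ^ (2 - 1) * deriv u ξ / 2) ξ :=
      (((hw ξ).hasDerivAt.sub (((hu ξ).hasDerivAt).const_mul c)).add
        (((hu ξ).hasDerivAt.pow 2).div_const 2))
    rw [hd.deriv]
    have := h1 ξ
    norm_num
    nlinarith
  have hFconst : ∀ x y : ℝ, F x = F y :=
    is_const_of_deriv_eq_zero hFdiff hFderiv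
  have hF0 : Tendsto F atBot (nhds 0) := by
    have : Tendsto F atBot (nhds (0 - c * 0 + 0 ^ 2 / 2)) :=
      ((hw0.sub (tendsto_const_nhds.mul hu0)).add ((hu0.pow 2).div_const 2))
    simpa using this
  have hFzero : ∀ ξ, F ξ = 0 := by
    intro ξ
    have h1' : Tendsto F atBot (nhds (F ξ)) := by
      have : F = fun _ => F ξ := funext fun x => hFconst x ξ
      rw [this]; exact tendsto_const_nhds
    exact tendsto_nhds_unique h1' hF0
  intro ξ
  have hwval : w ξ = c * u ξ - (u ξ) ^ 2 / 2 := by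
    have := hFzero ξ
    simp only [hF] at this
    linarith
  refine ⟨hwval, ?_, ?_⟩
  · have hw' : deriv w ξ = c * deriv u ξ - u ξ * deriv u ξ := by linarith [h1 ξ]
    have h3' := h3 ξ
    rw [hw'] at h3'
    nlinarith [h3']
  · have h2' := h2 ξ
    rw [hwval] at h2'
    field_simp
    nlinarith [h2']
end

section
/- Let c, τ ∈ ℝ with 1 + cτ ≠ 0. Suppose ũ, ṽ : ℝ → ℝ are differentiable and satisfy, for all ξ ∈ ℝ, ũ′(ξ)·(1 + cτ(ũ(ξ) − c)) = ṽ(ξ) and ṽ′(ξ) = (c − ũ(ξ)/2)·ũ(ξ)/(1 + cτ). Define H(u, v) = v²/2 − (u²/(1 + cτ))·(−(cτ/8)·u² + ((3c²τ − 1)/6)·u + c(1 − c²τ)/2). Then the function ξ ↦ H(ũ(ξ), ṽ(ξ)) is constant on ℝ, i.e., H is a first integral of the KdVH traveling-wave system. -/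
/-!
`H = v²/2 − V(u)` with the potential `V(u) = u²/(1+cτ) · (−(cτ/8)u² + ((3c²τ−1)/6)u + c(1−c²τ)/2)`,
and `V'(u) = (c − u/2) u (1 + cτ(u − c)) / (1+cτ)`. Along a solution the second equation gives
`d/dξ (v²/2) = v (c − u/2) u / (1+cτ)`, while the first (`v = u'(1 + cτ(u − c))`) turns this into
`V'(u) u' = d/dξ V(u)`, so `d/dξ H = 0`.
-/

theorem sq_half_sub_potential_eq {u v V V' : ℝ → ℝ} (hu : Differentiable ℝ u)
    (hv : Differentiable ℝ v) (hV : ∀ x, HasDerivAt V (V' x) x)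
    (h : ∀ ξ, v ξ * deriv v ξ = V' (u ξ) * deriv u ξ) (ξ₁ ξ₂ : ℝ) :
    v ξ₁ ^ 2 / 2 - V (u ξ₁) = v ξ₂ ^ 2 / 2 - V (u ξ₂) := by
  have hderiv : ∀ ξ, HasDerivAt (fun ξ => v ξ ^ 2 / 2 - V (u ξ)) 0 ξ := fun ξ => by
    have hsq := ((hv ξ).hasDerivAt.pow 2).div_const 2
    have hVu := (hV (u ξ)).comp ξ (hu ξ).hasDerivAt
    refine (hsq.sub hVu).congr_deriv ?_
    rw [← h ξ]
    ring
  exact is_const_of_deriv_eq_zero (fun ξ => (hderiv ξ).differentiableAt)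
    (fun ξ => (hderiv ξ).deriv) ξ₁ ξ₂

noncomputable def kdvhPotential (c τ x : ℝ) : ℝ :=
  x ^ 2 / (1 + c * τ) *
    (-(c * τ / 8) * x ^ 2 + (3 * c ^ 2 * τ - 1) / 6 * x + c * (1 - c ^ 2 * τ) / 2)

theorem hasDerivAt_kdvhPotential (c τ x : ℝ) :
    HasDerivAt (kdvhPotential c τ)
      ((c - x / 2) * x * (1 + c * τ * (x - c)) / (1 + c * τ)) x := by
  have hquadratic : HasDerivAt
      (fun y => -(c * τ / 8) * y ^ 2 + (3 * c ^ 2 * τ - 1) / 6 * y + c * (1 - c ^ 2 * τ) / 2)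
      (-(c * τ / 8) * (2 * x) + (3 * c ^ 2 * τ - 1) / 6) x := by
    simpa using (((hasDerivAt_pow 2 x).const_mul (-(c * τ / 8))).add
      ((hasDerivAt_id x).const_mul ((3 * c ^ 2 * τ - 1) / 6))).add_const (c * (1 - c ^ 2 * τ) / 2)
  refine (((hasDerivAt_pow 2 x).div_const (1 + c * τ)).mul hquadratic).congr_deriv ?_
  ring

theorem kdvh_first_integral_general (c τ : ℝ)
    (u v : ℝ → ℝ) (hu : Differentiable ℝ u) (hv : Differentiable ℝ v)
    (h1 : ∀ ξ : ℝ, deriv u ξ * (1 + c * τ * (u ξ - c)) = v ξ)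
    (h2 : ∀ ξ : ℝ, deriv v ξ = (c - u ξ / 2) * u ξ / (1 + c * τ))
    (H : ℝ → ℝ → ℝ)
    (hH : ∀ x y : ℝ, H x y = y ^ 2 / 2 -
      x ^ 2 / (1 + c * τ) *
        (-(c * τ / 8) * x ^ 2 + (3 * c ^ 2 * τ - 1) / 6 * x + c * (1 - c ^ 2 * τ) / 2)) :
    ∀ ξ₁ ξ₂ : ℝ, H (u ξ₁) (v ξ₁) = H (u ξ₂) (v ξ₂) := by
  intro ξ₁ ξ₂
  simp only [hH]
  refine sq_half_sub_potential_eq (V := kdvhPotential c τ) hu hv (hasDerivAt_kdvhPotential c τ)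
    (fun ξ => ?_) ξ₁ ξ₂
  rw [h2, ← h1]
  ring

/-- `H(u, v) = v²/2 − (u²/(1+cτ))(−(cτ/8)u² + ((3c²τ−1)/6)u + c(1−c²τ)/2)` is a first
integral of the KdVH traveling-wave system. -/
theorem kdvh_first_integral (c τ : ℝ) (hcτ : 1 + c * τ ≠ 0)
    (u v : ℝ → ℝ) (hu : Differentiable ℝ u) (hv : Differentiable ℝ v)
    (h1 : ∀ ξ : ℝ, deriv u ξ * (1 + c * τ * (u ξ - c)) = v ξ)
    (h2 : ∀ ξ : ℝ, deriv v ξ = (c - u ξ / 2) * u ξ / (1 + c * τ))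
    (H : ℝ → ℝ → ℝ)
    (hH : ∀ x y : ℝ, H x y = y ^ 2 / 2 -
      x ^ 2 / (1 + c * τ) *
        (-(c * τ / 8) * x ^ 2 + (3 * c ^ 2 * τ - 1) / 6 * x + c * (1 - c ^ 2 * τ) / 2)) :
    ∀ ξ₁ ξ₂ : ℝ, H (u ξ₁) (v ξ₁) = H (u ξ₂) (v ξ₂) :=
  kdvh_first_integral_general c τ u v hu hv h1 h2 H hH
end

section
/- Let c, τ ∈ ℝ with 1 + cτ ≠ 0 and 1 − c²τ ≠ 0. Suppose ũ : ℝ → ℝ is twice differentiable, ṽ : ℝ → ℝ is differentiable, and for all ξ ∈ ℝ they satisfy ũ′(ξ)·(1 + cτ(ũ(ξ) − c)) = ṽ(ξ) and ṽ′(ξ) = (c − ũ(ξ)/2)·ũ(ξ)/(1 + cτ). Then for all ξ ∈ ℝ: −ũ″(ξ) + (c/((1 + cτ)(1 − c²τ)))·ũ(ξ) = (1/((1 + cτ)(1 − c²τ)))·ũ(ξ)²/2 + (cτ/(1 − c²τ))·(ũ(ξ)·ũ′(ξ))′, where (ũ·ũ′)′ = ũ′² + ũ·ũ″. -/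
/-! Differentiating the first equation of the system and substituting the second one gives
`ũ″(1 + cτ(ũ − c)) + cτ ũ′² = (c − ũ/2)ũ/(1 + cτ)`; the second-order equation is this identity
divided by `1 − c²τ` and rearranged. -/

theorem hasDerivAt_deriv_mul_comp {u f : ℝ → ℝ} {f' x : ℝ} (hu : DifferentiableAt ℝ u x)
    (hu' : DifferentiableAt ℝ (deriv u) x) (hf : HasDerivAt f f' (u x)) :
    HasDerivAt (fun ξ => deriv u ξ * f (u ξ))
      (deriv (deriv u) x * f (u x) + deriv u x * (f' * deriv u x)) x :=
  hu'.hasDerivAt.mul (hf.comp x hu.hasDerivAt)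

theorem kdvh_second_order_of_differentiated_system {c τ u u' u'' : ℝ} (h1 : 1 + c * τ ≠ 0)
    (h2 : 1 - c ^ 2 * τ ≠ 0)
    (h : u'' * (1 + c * τ * (u - c)) + u' * (c * τ * u') = (c - u / 2) * u / (1 + c * τ)) :
    -u'' + c / ((1 + c * τ) * (1 - c ^ 2 * τ)) * u =
      1 / ((1 + c * τ) * (1 - c ^ 2 * τ)) * (u ^ 2 / 2) +
        c * τ / (1 - c ^ 2 * τ) * (u' ^ 2 + u * u'') := by
  rw [eq_div_iff h1] at h
  field_simp
  linear_combination (-2) * h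

theorem kdvh_second_order_tw_general (c τ : ℝ) (h1 : 1 + c * τ ≠ 0) (h2 : 1 - c ^ 2 * τ ≠ 0)
    (u v : ℝ → ℝ) (hu : Differentiable ℝ u) (hu' : Differentiable ℝ (deriv u))
    (e1 : ∀ ξ : ℝ, deriv u ξ * (1 + c * τ * (u ξ - c)) = v ξ)
    (e2 : ∀ ξ : ℝ, deriv v ξ = (c - u ξ / 2) * u ξ / (1 + c * τ)) :
    ∀ ξ : ℝ,
      -deriv (deriv u) ξ + c / ((1 + c * τ) * (1 - c ^ 2 * τ)) * u ξ =
        1 / ((1 + c * τ) * (1 - c ^ 2 * τ)) * ((u ξ) ^ 2 / 2) +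
        c * τ / (1 - c ^ 2 * τ) * ((deriv u ξ) ^ 2 + u ξ * deriv (deriv u) ξ) := by
  intro ξ
  have hfactor : HasDerivAt (fun y => 1 + c * τ * (y - c)) (c * τ) (u ξ) := by
    simpa using ((hasDerivAt_id (u ξ)).sub_const c).const_mul (c * τ) |>.const_add 1
  have hv := hasDerivAt_deriv_mul_comp (hu ξ) (hu' ξ) hfactor
  rw [funext e1] at hv
  exact kdvh_second_order_of_differentiated_system h1 h2 (hv.deriv ▸ e2 ξ)

/-- Solutions of the first-order KdVH traveling-wave system satisfy the second-order
equation `−ũ″ + (c/((1+cτ)(1−c²τ)))ũ = (1/((1+cτ)(1−c²τ)))ũ²/2 + (cτ/(1−c²τ))(ũũ′)′`. -/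
theorem kdvh_second_order_tw (c τ : ℝ) (h1 : 1 + c * τ ≠ 0) (h2 : 1 - c ^ 2 * τ ≠ 0)
    (u v : ℝ → ℝ) (hu : Differentiable ℝ u) (hu' : Differentiable ℝ (deriv u))
    (hv : Differentiable ℝ v)
    (e1 : ∀ ξ : ℝ, deriv u ξ * (1 + c * τ * (u ξ - c)) = v ξ)
    (e2 : ∀ ξ : ℝ, deriv v ξ = (c - u ξ / 2) * u ξ / (1 + c * τ)) :
    ∀ ξ : ℝ,
      -deriv (deriv u) ξ + c / ((1 + c * τ) * (1 - c ^ 2 * τ)) * u ξ =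
        1 / ((1 + c * τ) * (1 - c ^ 2 * τ)) * ((u ξ) ^ 2 / 2) +
        c * τ / (1 - c ^ 2 * τ) * ((deriv u ξ) ^ 2 + u ξ * deriv (deriv u) ξ) :=
  kdvh_second_order_tw_general c τ h1 h2 u v hu hu' e1 e2
end

section
/- Let c, τ ∈ ℝ and set α = cτ. Let u, v, w : ℝ × ℝ → ℝ (functions of (t, x)) be infinitely differentiable and suppose they satisfy, at every point, the KdVH system ∂ₜu + u∂ₓu + ∂ₓw = 0, τ∂ₜv = ∂ₓv − w, τ∂ₜw = −(∂ₓu − v), together with the transport equations ∂ₜv + c∂ₓv = 0 and ∂ₜw + c∂ₓw = 0. Then u satisfies, at every point, ∂ₜu + u·∂ₓu + (1 + α)·∂ₓ³u + α(1 + α)·(∂ₓ²∂ₜu + 3·∂ₓu·∂ₓ²u + u·∂ₓ³u) = 0. -/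
/-- Partial derivative in the first (time) variable. -/
noncomputable def partialT (f : ℝ → ℝ → ℝ) : ℝ → ℝ → ℝ :=
  fun t x => deriv (fun s => f s x) t

/-- Partial derivative in the second (space) variable. -/
noncomputable def partialX (f : ℝ → ℝ → ℝ) : ℝ → ℝ → ℝ :=
  fun t x => deriv (fun y => f t y) x

lemma partialX_eq (f : ℝ → ℝ → ℝ) (hf : ContDiff ℝ (⊤ : ℕ∞) (Function.uncurry f)) (t x : ℝ) :
    partialX f t x = fderiv ℝ (Function.uncurry f) (t, x) (0, 1) := by
  have h1 : HasFDerivAt (Function.uncurry f) (fderiv ℝ (Function.uncurry f) (t, x)) (t, x) :=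
    (hf.differentiable (by simp) (t, x)).hasFDerivAt
  have h2 : HasDerivAt (fun y : ℝ => ((t : ℝ), y)) ((0 : ℝ), (1 : ℝ)) x :=
    (hasDerivAt_const x t).prodMk (hasDerivAt_id x)
  exact (h1.comp_hasDerivAt x h2).deriv

lemma partialT_eq (f : ℝ → ℝ → ℝ) (hf : ContDiff ℝ (⊤ : ℕ∞) (Function.uncurry f)) (t x : ℝ) :
    partialT f t x = fderiv ℝ (Function.uncurry f) (t, x) (1, 0) := by
  have h1 : HasFDerivAt (Function.uncurry f) (fderiv ℝ (Function.uncurry f) (t, x)) (t, x) :=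
    (hf.differentiable (by simp) (t, x)).hasFDerivAt
  have h2 : HasDerivAt (fun s : ℝ => (s, (x : ℝ))) ((1 : ℝ), (0 : ℝ)) t :=
    (hasDerivAt_id t).prodMk (hasDerivAt_const t x)
  exact (h1.comp_hasDerivAt t h2).deriv

lemma partialX_smooth (f : ℝ → ℝ → ℝ) (hf : ContDiff ℝ (⊤ : ℕ∞) (Function.uncurry f)) :
    ContDiff ℝ (⊤ : ℕ∞) (Function.uncurry (partialX f)) := by
  have : Function.uncurry (partialX f) =
      fun p : ℝ × ℝ => fderiv ℝ (Function.uncurry f) p ((0 : ℝ), (1 : ℝ)) := by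
    funext p; exact partialX_eq f hf p.1 p.2
  rw [this]
  exact (hf.fderiv_right (by simp)).clm_apply contDiff_const

lemma partialT_smooth (f : ℝ → ℝ → ℝ) (hf : ContDiff ℝ (⊤ : ℕ∞) (Function.uncurry f)) :
    ContDiff ℝ (⊤ : ℕ∞) (Function.uncurry (partialT f)) := by
  have : Function.uncurry (partialT f) =
      fun p : ℝ × ℝ => fderiv ℝ (Function.uncurry f) p ((1 : ℝ), (0 : ℝ)) := by
    funext p; exact partialT_eq f hf p.1 p.2
  rw [this]
  exact (hf.fderiv_right (by simp)).clm_apply contDiff_const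

lemma diffX (f : ℝ → ℝ → ℝ) (hf : ContDiff ℝ (⊤ : ℕ∞) (Function.uncurry f)) (t x : ℝ) :
    DifferentiableAt ℝ (fun y => f t y) x := by
  have : (fun y => f t y) = Function.uncurry f ∘ (fun y : ℝ => (t, y)) := rfl
  rw [this]
  exact ((hf.comp (ContDiff.prodMk contDiff_const contDiff_id)).differentiable (by simp)).differentiableAt

/-- For traveling waves of speed `c` in the components `v, w`, the `u`-component of
the KdVH system satisfies (with `α = cτ`) the Camassa–Holm/Degasperis–Procesi-type
equation `∂ₜu + u∂ₓu + (1+α)∂ₓ³u + α(1+α)(∂ₓ²∂ₜu + 3∂ₓu·∂ₓ²u + u∂ₓ³u)` = 0`. -/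
theorem kdvh_traveling_wave_DP_like (c τ : ℝ) (u v w : ℝ → ℝ → ℝ)
    (hu : ContDiff ℝ (⊤ : ℕ∞) (Function.uncurry u))
    (hv : ContDiff ℝ (⊤ : ℕ∞) (Function.uncurry v))
    (hw : ContDiff ℝ (⊤ : ℕ∞) (Function.uncurry w))
    (h1 : ∀ t x : ℝ, partialT u t x + u t x * partialX u t x + partialX w t x = 0)
    (h2 : ∀ t x : ℝ, τ * partialT v t x = partialX v t x - w t x)
    (h3 : ∀ t x : ℝ, τ * partialT w t x = -(partialX u t x - v t x))
    (h4 : ∀ t x : ℝ, partialT v t x + c * partialX v t x = 0)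
    (h5 : ∀ t x : ℝ, partialT w t x + c * partialX w t x = 0) :
    ∀ t x : ℝ,
      partialT u t x + u t x * partialX u t x +
        (1 + c * τ) * partialX (partialX (partialX u)) t x +
        (c * τ) * (1 + c * τ) *
          (partialX (partialX (partialT u)) t x +
            3 * partialX u t x * partialX (partialX u) t x +
            u t x * partialX (partialX (partialX u)) t x) = 0 := by
  have hux := partialX_smooth u hu
  have huxx := partialX_smooth _ hux
  have hut := partialT_smooth u hu
  have hutx := partialX_smooth _ hut
  have hwx := partialX_smooth w hw
  have hwxx := partialX_smooth _ hwx
  -- E2 : v = uₓ - cτ wₓ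
  have E2 : ∀ t x : ℝ, v t x = partialX u t x - c * τ * partialX w t x := by
    intro t x
    linear_combination τ * h5 t x - h3 t x
  -- E1 : w = (1+cτ) vₓ
  have E1 : ∀ t x : ℝ, w t x = (1 + c * τ) * partialX v t x := by
    intro t x
    linear_combination h2 t x - τ * h4 t x
  -- E3 : vₓ = uₓₓ - cτ wₓₓ
  have E3 : ∀ t x : ℝ, partialX v t x =
      partialX (partialX u) t x - c * τ * partialX (partialX w) t x := by
    intro t x
    have hfun : (fun y => v t y) = fun y => partialX u t y - c * τ * partialX w t y :=
      funext fun y => E2 t y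
    have d1 := diffX (partialX u) hux t x
    have d2 := diffX (partialX w) hwx t x
    show deriv (fun y => v t y) x = _
    rw [hfun, deriv_fun_sub d1 (d2.const_mul _), deriv_const_mul _ d2]
    rfl
  -- E4 : w = (1+cτ) uₓₓ - cτ(1+cτ) wₓₓ
  have E4 : ∀ t x : ℝ, w t x =
      (1 + c * τ) * partialX (partialX u) t x
        - c * τ * (1 + c * τ) * partialX (partialX w) t x := by
    intro t x
    rw [E1 t x, E3 t x]; ring
  -- E5 : wₓ = (1+cτ) uₓₓₓ - cτ(1+cτ) wₓₓₓ
  have E5 : ∀ t x : ℝ, partialX w t x =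
      (1 + c * τ) * partialX (partialX (partialX u)) t x
        - c * τ * (1 + c * τ) * partialX (partialX (partialX w)) t x := by
    intro t x
    have hfun : (fun y => w t y) = fun y =>
        (1 + c * τ) * partialX (partialX u) t y
          - c * τ * (1 + c * τ) * partialX (partialX w) t y :=
      funext fun y => E4 t y
    have d1 := diffX (partialX (partialX u)) huxx t x
    have d2 := diffX (partialX (partialX w)) hwxx t x
    show deriv (fun y => w t y) x = _
    rw [hfun, deriv_fun_sub (d1.const_mul _) (d2.const_mul _), deriv_const_mul _ d1,
      deriv_const_mul _ d2]
    rfl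
  -- E6 : wₓ = -uₜ - u uₓ
  have E6 : ∀ t x : ℝ, partialX w t x = -(partialT u t x) - u t x * partialX u t x := by
    intro t x
    linarith [h1 t x]
  -- E7 : wₓₓ = -uₜₓ - (uₓ uₓ + u uₓₓ)
  have E7 : ∀ t x : ℝ, partialX (partialX w) t x =
      -(partialX (partialT u) t x)
        - (partialX u t x * partialX u t x + u t x * partialX (partialX u) t x) := by
    intro t x
    have hfun : (fun y => partialX w t y) = fun y =>
        -(partialT u t y) - u t y * partialX u t y := funext fun y => E6 t y
    have d1 := diffX (partialT u) hut t x
    have d2 := diffX u hu t x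
    have d3 := diffX (partialX u) hux t x
    show deriv (fun y => partialX w t y) x = _
    rw [hfun, deriv_fun_sub d1.fun_neg (d2.fun_mul d3), deriv.fun_neg, deriv_fun_mul d2 d3]
    rfl
  -- E8 : wₓₓₓ = -uₜₓₓ - (3 uₓ uₓₓ + u uₓₓₓ)
  have E8 : ∀ t x : ℝ, partialX (partialX (partialX w)) t x =
      -(partialX (partialX (partialT u)) t x)
        - (3 * partialX u t x * partialX (partialX u) t x
            + u t x * partialX (partialX (partialX u)) t x) := by
    intro t x
    have hfun : (fun y => partialX (partialX w) t y) = fun y =>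
        -(partialX (partialT u) t y)
          - (partialX u t y * partialX u t y + u t y * partialX (partialX u) t y) :=
      funext fun y => E7 t y
    have d1 := diffX (partialX (partialT u)) hutx t x
    have d2 := diffX u hu t x
    have d3 := diffX (partialX u) hux t x
    have d4 := diffX (partialX (partialX u)) huxx t x
    show deriv (fun y => partialX (partialX w) t y) x = _
    rw [hfun, deriv_fun_sub d1.fun_neg ((d3.fun_mul d3).fun_add (d2.fun_mul d4)), deriv.fun_neg,
      deriv_fun_add (d3.fun_mul d3) (d2.fun_mul d4), deriv_fun_mul d3 d3, deriv_fun_mul d2 d4]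
    show -(partialX (partialX (partialT u)) t x)
        - (partialX (partialX u) t x * partialX u t x
            + partialX u t x * partialX (partialX u) t x
          + (partialX u t x * partialX (partialX u) t x
            + u t x * partialX (partialX (partialX u)) t x)) = _
    ring
  intro t x
  linear_combination h1 t x - E5 t x + (c * τ * (1 + c * τ)) * E8 t x
end

section
/- Let τ > 0 and L > 0. Suppose u, v, w : ℝ × ℝ → ℝ are infinitely differentiable, L-periodic in the second (spatial) variable, and satisfy the KdVH system ∂ₜu + u∂ₓu + ∂ₓw = 0, τ∂ₜv = ∂ₓv − w, τ∂ₜw = −(∂ₓu − v) at every point. Then the modified energy t ↦ ∫₀ᴸ ( u(t, x)²/2 + τ·v(t, x)²/2 + τ·w(t, x)²/2 ) dx is constant in t. -/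
open MeasureTheory Function

/-- Partial derivative in the first (time) variable. -/
noncomputable def pdt (f : ℝ → ℝ → ℝ) (t x : ℝ) : ℝ :=
  fderiv ℝ (Function.uncurry f) (t, x) (1, 0)

/-- Partial derivative in the second (space) variable. -/
noncomputable def pdx (f : ℝ → ℝ → ℝ) (t x : ℝ) : ℝ :=
  fderiv ℝ (Function.uncurry f) (t, x) (0, 1)

lemma hasDerivAt_pdt {f : ℝ → ℝ → ℝ} (hf : ContDiff ℝ (⊤ : ℕ∞) (Function.uncurry f))
    (t x : ℝ) : HasDerivAt (fun s => f s x) (pdt f t x) t := by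
  have h := (hf.differentiable (by simp) (t, x)).hasFDerivAt
  have hline : HasDerivAt (fun s : ℝ => (s, x)) ((1 : ℝ), (0 : ℝ)) t :=
    (hasDerivAt_id t).prodMk (hasDerivAt_const t x)
  exact h.comp_hasDerivAt t hline

lemma hasDerivAt_pdx {f : ℝ → ℝ → ℝ} (hf : ContDiff ℝ (⊤ : ℕ∞) (Function.uncurry f))
    (t x : ℝ) : HasDerivAt (fun y => f t y) (pdx f t x) x := by
  have h := (hf.differentiable (by simp) (t, x)).hasFDerivAt
  have hline : HasDerivAt (fun y : ℝ => (t, y)) ((0 : ℝ), (1 : ℝ)) x :=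
    (hasDerivAt_const x t).prodMk (hasDerivAt_id x)
  exact h.comp_hasDerivAt x hline

lemma continuous_pdx {f : ℝ → ℝ → ℝ} (hf : ContDiff ℝ (⊤ : ℕ∞) (Function.uncurry f)) :
    Continuous (fun p : ℝ × ℝ => pdx f p.1 p.2) := by
  have : Continuous (fun p : ℝ × ℝ => fderiv ℝ (Function.uncurry f) p) :=
    hf.continuous_fderiv (by simp)
  exact this.clm_apply continuous_const

/-- For smooth spatially `L`-periodic solutions of the KdVH system, the modified
energy `∫₀ᴸ (u²/2 + τv²/2 + τw²/2) dx` is constant in time. -/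
theorem kdvh_modified_energy_conservation (τ L : ℝ) (hτ : 0 < τ) (hL : 0 < L)
    (u v w : ℝ → ℝ → ℝ)
    (hu : ContDiff ℝ (⊤ : ℕ∞) (Function.uncurry u))
    (hv : ContDiff ℝ (⊤ : ℕ∞) (Function.uncurry v))
    (hw : ContDiff ℝ (⊤ : ℕ∞) (Function.uncurry w))
    (hup : ∀ t x : ℝ, u t (x + L) = u t x)
    (hvp : ∀ t x : ℝ, v t (x + L) = v t x)
    (hwp : ∀ t x : ℝ, w t (x + L) = w t x)
    (h1 : ∀ t x : ℝ, deriv (fun s => u s x) t + u t x * deriv (fun y => u t y) x +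
      deriv (fun y => w t y) x = 0)
    (h2 : ∀ t x : ℝ, τ * deriv (fun s => v s x) t = deriv (fun y => v t y) x - w t x)
    (h3 : ∀ t x : ℝ,
      τ * deriv (fun s => w s x) t = -(deriv (fun y => u t y) x - v t x)) :
    ∀ t₁ t₂ : ℝ,
      (∫ x in (0:ℝ)..L, (u t₁ x ^ 2 / 2 + τ * v t₁ x ^ 2 / 2 + τ * w t₁ x ^ 2 / 2)) =
        ∫ x in (0:ℝ)..L, (u t₂ x ^ 2 / 2 + τ * v t₂ x ^ 2 / 2 + τ * w t₂ x ^ 2 / 2) := by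
  -- the "flux derivative" function
  set g : ℝ → ℝ → ℝ := fun t x =>
    -(u t x ^ 2 * pdx u t x + pdx u t x * w t x + u t x * pdx w t x
      - v t x * pdx v t x) with hg
  have cu : Continuous (fun p : ℝ × ℝ => u p.1 p.2) := hu.continuous
  have cv : Continuous (fun p : ℝ × ℝ => v p.1 p.2) := hv.continuous
  have cw : Continuous (fun p : ℝ × ℝ => w p.1 p.2) := hw.continuous
  have cux := continuous_pdx hu
  have cvx := continuous_pdx hv
  have cwx := continuous_pdx hw
  have cg : Continuous (fun p : ℝ × ℝ => g p.1 p.2) := by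
    rw [hg]
    exact ((((cu.pow 2).mul cux).add (cux.mul cw) |>.add (cu.mul cwx)).sub
      (cv.mul cvx)).neg
  -- time derivative of the energy density
  have hE : ∀ t x : ℝ,
      HasDerivAt (fun s => u s x ^ 2 / 2 + τ * v s x ^ 2 / 2 + τ * w s x ^ 2 / 2)
        (g t x) t := by
    intro t x
    have hU := hasDerivAt_pdt hu t x
    have hV := hasDerivAt_pdt hv t x
    have hW := hasDerivAt_pdt hw t x
    have H := (((hU.pow 2).div_const 2).add (((hV.pow 2).const_mul τ).div_const 2)).add
      (((hW.pow 2).const_mul τ).div_const 2)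
    have e1 : pdt u t x + u t x * pdx u t x + pdx w t x = 0 := by
      have := h1 t x
      rwa [(hasDerivAt_pdt hu t x).deriv, (hasDerivAt_pdx hu t x).deriv,
        (hasDerivAt_pdx hw t x).deriv] at this
    have e2 : τ * pdt v t x = pdx v t x - w t x := by
      have := h2 t x
      rwa [(hasDerivAt_pdt hv t x).deriv, (hasDerivAt_pdx hv t x).deriv] at this
    have e3 : τ * pdt w t x = -(pdx u t x - v t x) := by
      have := h3 t x
      rwa [(hasDerivAt_pdt hw t x).deriv, (hasDerivAt_pdx hu t x).deriv] at this
    refine H.congr_deriv (Eq.symm ?_)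
    rw [hg]
    push_cast
    linear_combination (-(u t x)) * e1 - v t x * e2 - w t x * e3
  -- space antiderivative of -g : the flux F
  have hFx : ∀ t x : ℝ,
      HasDerivAt (fun y => u t y ^ 3 / 3 + u t y * w t y - v t y ^ 2 / 2)
        (-(g t x)) x := by
    intro t x
    have hUx := hasDerivAt_pdx hu t x
    have hVx := hasDerivAt_pdx hv t x
    have hWx := hasDerivAt_pdx hw t x
    have H := (((hUx.pow 3).div_const 3).add (hUx.mul hWx)).sub ((hVx.pow 2).div_const 2)
    refine H.congr_deriv (Eq.symm ?_)
    rw [hg]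
    push_cast
    ring
  -- the key: inner spatial integral of g vanishes
  have hinner : ∀ t : ℝ, (∫ x in (0:ℝ)..L, g t x) = 0 := by
    intro t
    have hint : IntervalIntegrable (fun x => -(g t x)) volume 0 L :=
      ((cg.comp (continuous_const.prodMk continuous_id)).neg).intervalIntegrable 0 L
    have := intervalIntegral.integral_eq_sub_of_hasDerivAt
      (f := fun y => u t y ^ 3 / 3 + u t y * w t y - v t y ^ 2 / 2)
      (f' := fun x => -(g t x)) (fun x _ => hFx t x) hint
    have hper : u t L ^ 3 / 3 + u t L * w t L - v t L ^ 2 / 2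
        = u t 0 ^ 3 / 3 + u t 0 * w t 0 - v t 0 ^ 2 / 2 := by
      have h1' : u t L = u t 0 := by simpa using hup t 0
      have h2' : v t L = v t 0 := by simpa using hvp t 0
      have h3' : w t L = w t 0 := by simpa using hwp t 0
      rw [h1', h2', h3']
    have h0 : (∫ x in (0:ℝ)..L, -(g t x))
        = (u t L ^ 3 / 3 + u t L * w t L - v t L ^ 2 / 2)
          - (u t 0 ^ 3 / 3 + u t 0 * w t 0 - v t 0 ^ 2 / 2) := this
    rw [hper, sub_self, intervalIntegral.integral_neg] at h0
    linarith
  -- main argument for ordered times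
  have key : ∀ t₁ t₂ : ℝ, t₁ ≤ t₂ →
      (∫ x in (0:ℝ)..L, (u t₁ x ^ 2 / 2 + τ * v t₁ x ^ 2 / 2 + τ * w t₁ x ^ 2 / 2)) =
        ∫ x in (0:ℝ)..L, (u t₂ x ^ 2 / 2 + τ * v t₂ x ^ 2 / 2 + τ * w t₂ x ^ 2 / 2) := by
    intro t₁ t₂ ht
    have ce : ∀ t : ℝ, Continuous (fun x =>
        u t x ^ 2 / 2 + τ * v t x ^ 2 / 2 + τ * w t x ^ 2 / 2) := by
      intro t
      have cu' : Continuous (fun x => u t x) := cu.comp (continuous_const.prodMk continuous_id)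
      have cv' : Continuous (fun x => v t x) := cv.comp (continuous_const.prodMk continuous_id)
      have cw' : Continuous (fun x => w t x) := cw.comp (continuous_const.prodMk continuous_id)
      exact (((cu'.pow 2).div_const 2).add ((continuous_const.mul (cv'.pow 2)).div_const 2)).add
        ((continuous_const.mul (cw'.pow 2)).div_const 2)
    -- FTC in time for each x
    have hFTC : ∀ x : ℝ,
        (u t₂ x ^ 2 / 2 + τ * v t₂ x ^ 2 / 2 + τ * w t₂ x ^ 2 / 2)
          - (u t₁ x ^ 2 / 2 + τ * v t₁ x ^ 2 / 2 + τ * w t₁ x ^ 2 / 2)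
        = ∫ s in t₁..t₂, g s x := by
      intro x
      have hint : IntervalIntegrable (fun s => g s x) volume t₁ t₂ :=
        (cg.comp (continuous_id.prodMk continuous_const)).intervalIntegrable t₁ t₂
      exact (intervalIntegral.integral_eq_sub_of_hasDerivAt (fun s _ => hE s x) hint).symm
    -- integrability of g on the rectangle
    have hgint : Integrable (Function.uncurry fun x s => g s x)
        ((volume.restrict (Set.Ioc (0:ℝ) L)).prod (volume.restrict (Set.Ioc t₁ t₂))) := by
      rw [Measure.prod_restrict]
      have csw : Continuous (Function.uncurry fun x s => g s x) :=
        cg.comp continuous_swap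
      have : IntegrableOn (Function.uncurry fun x s => g s x)
          ((Set.Icc (0:ℝ) L) ×ˢ (Set.Icc t₁ t₂)) (volume.prod volume) :=
        csw.continuousOn.integrableOn_compact (isCompact_Icc.prod isCompact_Icc)
      exact this.mono_set (Set.prod_mono Set.Ioc_subset_Icc_self Set.Ioc_subset_Icc_self)
    -- put it together
    have hdiff : (∫ x in (0:ℝ)..L,
        ((u t₂ x ^ 2 / 2 + τ * v t₂ x ^ 2 / 2 + τ * w t₂ x ^ 2 / 2)
          - (u t₁ x ^ 2 / 2 + τ * v t₁ x ^ 2 / 2 + τ * w t₁ x ^ 2 / 2))) = 0 := by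
      have step1 : (∫ x in (0:ℝ)..L,
          ((u t₂ x ^ 2 / 2 + τ * v t₂ x ^ 2 / 2 + τ * w t₂ x ^ 2 / 2)
            - (u t₁ x ^ 2 / 2 + τ * v t₁ x ^ 2 / 2 + τ * w t₁ x ^ 2 / 2)))
          = ∫ x in (0:ℝ)..L, ∫ s in t₁..t₂, g s x := by
        apply intervalIntegral.integral_congr
        intro x _
        exact hFTC x
      rw [step1]
      rw [intervalIntegral.integral_of_le hL.le]
      have step2 : ∀ x : ℝ, (∫ s in t₁..t₂, g s x) = ∫ s in Set.Ioc t₁ t₂, g s x := by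
        intro x; rw [intervalIntegral.integral_of_le ht]
      simp_rw [step2]
      rw [integral_integral_swap hgint]
      have step3 : (∫ s in Set.Ioc t₁ t₂, ∫ x in Set.Ioc (0:ℝ) L, g s x)
          = ∫ s in Set.Ioc t₁ t₂, (0:ℝ) := by
        apply integral_congr_ae
        filter_upwards with s
        rw [← intervalIntegral.integral_of_le hL.le]
        exact hinner s
      rw [step3, integral_zero]
    have hi1 : IntervalIntegrable (fun x =>
        u t₁ x ^ 2 / 2 + τ * v t₁ x ^ 2 / 2 + τ * w t₁ x ^ 2 / 2) volume 0 L :=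
      (ce t₁).intervalIntegrable 0 L
    have hi2 : IntervalIntegrable (fun x =>
        u t₂ x ^ 2 / 2 + τ * v t₂ x ^ 2 / 2 + τ * w t₂ x ^ 2 / 2) volume 0 L :=
      (ce t₂).intervalIntegrable 0 L
    rw [intervalIntegral.integral_sub hi2 hi1] at hdiff
    linarith
  intro t₁ t₂
  rcases le_total t₁ t₂ with h | h
  · exact key t₁ t₂ h
  · exact (key t₂ t₁ h).symm
end

section
/- Let N ∈ ℕ and let M, D₊, D₋ ∈ ℝ^{N×N} with M symmetric. If M·D₊ + D₋ᵀ·M = 0 (the periodic upwind summation-by-parts property), then the arithmetic average D = (D₊ + D₋)/2 satisfies M·D + Dᵀ·M = 0, i.e., D is a periodic first-derivative SBP operator with the same norm matrix M (equivalently, M·D is skew-symmetric). -/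
/-- If `(D₊, D₋, M)` satisfies the periodic upwind SBP property `M D₊ + D₋ᵀ M = 0`
with `M` symmetric, then the average `D = (D₊ + D₋)/2` is a periodic first-derivative
SBP operator with the same norm matrix: `M D + Dᵀ M = 0`. -/
theorem upwind_sbp_average_is_sbp (N : ℕ) (M Dp Dm : Matrix (Fin N) (Fin N) ℝ)
    (hM : M.IsSymm) (hSBP : M * Dp + Dm.transpose * M = 0) :
    M * ((1/2 : ℝ) • (Dp + Dm)) + ((1/2 : ℝ) • (Dp + Dm)).transpose * M = 0 := by
  have h2 := congrArg Matrix.transpose hSBP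
  simp only [Matrix.transpose_add, Matrix.transpose_mul, Matrix.transpose_transpose,
    Matrix.transpose_zero, hM.eq] at h2
  rw [Matrix.transpose_smul, Matrix.transpose_add, Matrix.mul_smul, Matrix.smul_mul,
    ← smul_add, mul_add, add_mul]
  have : M * Dp + M * Dm + (Dp.transpose * M + Dm.transpose * M)
      = (M * Dp + Dm.transpose * M) + (Dp.transpose * M + M * Dm) := by abel
  rw [this, hSBP, h2]
  simp
end

section
/- Let N ∈ ℕ, let M ∈ ℝ^{N×N} be diagonal with positive diagonal entries, and let D₊, D₋ ∈ ℝ^{N×N} satisfy M·D₊ + D₋ᵀ·M = 0 and D₊𝟙 = D₋𝟙 = 0, where 𝟙 ∈ ℝ^N is the all-ones vector. Set D = (D₊ + D₋)/2. Suppose η : ℝ → ℝ^N is differentiable and satisfies, for all t, η′(t) = −(1/3)·( D(η(t)∘η(t)) + η(t)∘(D η(t)) ) − D₊ D D₋ η(t), where ∘ is the entrywise product. Then both the discrete mass t ↦ 𝟙ᵀ M η(t) and the discrete energy t ↦ (1/2)·η(t)ᵀ M η(t) are constant in t. -/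
/-!
Since `M` is symmetric, mass and energy change at the rates `𝟙ᵀMη′` and `ηᵀMη′`, so it suffices
to show `𝟙ᵀM f(a) = 0` and `aᵀM f(a) = 0` for the right-hand side `f` and every state `a`. The SBP relation makes `MD` skew-symmetric and gives
`MD₊ = −D₋ᵀM`; a diagonal `M` commutes with entrywise products. For the energy, the split form
contributes `aᵀMD(a∘a) + (a∘a)ᵀMDa = 0` and the dispersive term is `−(D₋a)ᵀMD(D₋a) = 0`. For the
mass, `D𝟙 = 0` and `𝟙ᵀMD₊ = −(D₋𝟙)ᵀM = 0` remove the flux and dispersive terms, and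
`𝟙ᵀM(a∘Da) = aᵀMDa = 0`.
-/

open Matrix

section Calculus

variable {m ι : Type*} [Fintype ι] {f g : ℝ → ι → ℝ} {f' g' : ι → ℝ} {t : ℝ}

theorem HasDerivAt.dotProduct (hf : HasDerivAt f f' t) (hg : HasDerivAt g g' t) :
    HasDerivAt (fun s => f s ⬝ᵥ g s) (f' ⬝ᵥ g t + f t ⬝ᵥ g') t := by
  simpa only [_root_.dotProduct, ← Finset.sum_add_distrib] using
    HasDerivAt.fun_sum (u := Finset.univ) fun i _ =>
      (hasDerivAt_pi.1 hf i).fun_mul (hasDerivAt_pi.1 hg i)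

theorem HasDerivAt.mulVec (A : Matrix m ι ℝ) (hf : HasDerivAt f f' t) :
    HasDerivAt (fun s => A *ᵥ f s) (A *ᵥ f') t :=
  hasDerivAt_pi.2 fun i => (hasDerivAt_const t (A i)).dotProduct hf |>.congr_deriv <| by
    rw [zero_dotProduct, zero_add]; rfl

end Calculus

section QuadraticForms

variable {ι : Type*} [Fintype ι] {A : Matrix ι ι ℝ}

theorem dotProduct_mulVec_eq_neg_of_transpose_eq_neg (hA : Aᵀ = -A) (v w : ι → ℝ) :
    v ⬝ᵥ A *ᵥ w = -(w ⬝ᵥ A *ᵥ v) := by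
  rw [dotProduct_mulVec, ← mulVec_transpose, hA, neg_mulVec, neg_dotProduct, dotProduct_comm]

theorem dotProduct_mulVec_self_eq_zero_of_transpose_eq_neg (hA : Aᵀ = -A) (v : ι → ℝ) :
    v ⬝ᵥ A *ᵥ v = 0 := by
  linarith [dotProduct_mulVec_eq_neg_of_transpose_eq_neg hA v v]

theorem Matrix.IsSymm.dotProduct_mulVec_comm (hA : A.IsSymm) (v w : ι → ℝ) :
    v ⬝ᵥ A *ᵥ w = w ⬝ᵥ A *ᵥ v := by
  rw [dotProduct_mulVec, ← mulVec_transpose, hA.eq, dotProduct_comm]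

theorem Matrix.IsDiag.dotProduct_mulVec_mul [DecidableEq ι] (hA : A.IsDiag) (u a v : ι → ℝ) :
    u ⬝ᵥ A *ᵥ (a * v) = (u * a) ⬝ᵥ A *ᵥ v := by
  rw [← hA.diagonal_diag]
  simp only [_root_.dotProduct, mulVec_diagonal, Pi.mul_apply]
  exact Finset.sum_congr rfl fun i _ => by ring

end QuadraticForms

section SBP

variable {ι : Type*} [Fintype ι] {M D Dp Dm : Matrix ι ι ℝ}

theorem transpose_mul_half_smul_add_eq_neg (hM : M.IsSymm) (hSBP : M * Dp + Dmᵀ * M = 0) :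
    (M * ((1/2 : ℝ) • (Dp + Dm)))ᵀ = -(M * ((1/2 : ℝ) • (Dp + Dm))) := by
  have hDm : Dmᵀ * M = -(M * Dp) := eq_neg_of_add_eq_zero_right hSBP
  have hDp : Dpᵀ * M = -(M * Dm) := by
    have := congrArg transpose hSBP
    rw [transpose_add, transpose_mul, transpose_mul, transpose_transpose, hM.eq,
      transpose_zero] at this
    exact eq_neg_of_add_eq_zero_left this
  rw [transpose_mul, transpose_smul, transpose_add, hM.eq, smul_mul, add_mul, hDp, hDm,
    Matrix.mul_smul, mul_add]
  module

noncomputable def kdvRHS (D Dp Dm : Matrix ι ι ℝ) (a : ι → ℝ) : ι → ℝ :=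
  -(1/3 : ℝ) • (D *ᵥ (a * a) + a * D *ᵥ a) - (Dp * D * Dm) *ᵥ a

variable [DecidableEq ι]

theorem one_dotProduct_mulVec_kdvRHS (hM : M.IsDiag) (hMD : (M * D)ᵀ = -(M * D))
    (hD1 : D *ᵥ 1 = 0) (h1MDp : 1 ᵥ* (M * Dp) = 0) (a : ι → ℝ) :
    1 ⬝ᵥ M *ᵥ kdvRHS D Dp Dm a = 0 := by
  have hflux : 1 ⬝ᵥ M *ᵥ D *ᵥ (a * a) = 0 := by
    rw [mulVec_mulVec, dotProduct_mulVec_eq_neg_of_transpose_eq_neg hMD, ← mulVec_mulVec, hD1,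
      mulVec_zero, dotProduct_zero, neg_zero]
  have hadvective : 1 ⬝ᵥ M *ᵥ (a * D *ᵥ a) = 0 := by
    rw [hM.dotProduct_mulVec_mul, one_mul, mulVec_mulVec,
      dotProduct_mulVec_self_eq_zero_of_transpose_eq_neg hMD]
  have hdispersion : 1 ⬝ᵥ M *ᵥ (Dp * D * Dm) *ᵥ a = 0 := by
    rw [mulVec_mulVec, dotProduct_mulVec, ← Matrix.mul_assoc, ← Matrix.mul_assoc,
      ← vecMul_vecMul, ← vecMul_vecMul, h1MDp, zero_vecMul, zero_vecMul, zero_dotProduct]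
  simp only [kdvRHS, mulVec_sub, mulVec_smul, mulVec_add, dotProduct_sub, dotProduct_smul,
    dotProduct_add, hflux, hadvective, hdispersion, add_zero, smul_zero, sub_zero]

theorem dotProduct_mulVec_kdvRHS_self (hM : M.IsDiag) (hMD : (M * D)ᵀ = -(M * D))
    (hMDp : M * Dp = -(Dmᵀ * M)) (a : ι → ℝ) :
    a ⬝ᵥ M *ᵥ kdvRHS D Dp Dm a = 0 := by
  have hsplit : a ⬝ᵥ M *ᵥ (D *ᵥ (a * a) + a * D *ᵥ a) = 0 := by
    rw [mulVec_add, dotProduct_add, hM.dotProduct_mulVec_mul, mulVec_mulVec, mulVec_mulVec,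
      dotProduct_mulVec_eq_neg_of_transpose_eq_neg hMD a, neg_add_cancel]
  have hdispersion : a ⬝ᵥ M *ᵥ (Dp * D * Dm) *ᵥ a = 0 := by
    rw [mulVec_mulVec, ← Matrix.mul_assoc, ← Matrix.mul_assoc, hMDp, Matrix.neg_mul,
      Matrix.neg_mul, neg_mulVec, dotProduct_neg, Matrix.mul_assoc Dmᵀ, ← mulVec_mulVec,
      ← mulVec_mulVec, dotProduct_mulVec, vecMul_transpose,
      dotProduct_mulVec_self_eq_zero_of_transpose_eq_neg hMD, neg_zero]
  simp only [kdvRHS, mulVec_sub, mulVec_smul, dotProduct_sub, dotProduct_smul, hsplit,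
    hdispersion, smul_zero, sub_zero]

end SBP

theorem kdv_semidiscretization_invariants_general (N : ℕ)
    (M Dp Dm : Matrix (Fin N) (Fin N) ℝ)
    (hMdiag : M.IsDiag)
    (hSBP : M * Dp + Dm.transpose * M = 0)
    (hDp1 : Dp.mulVec (fun _ => 1) = 0) (hDm1 : Dm.mulVec (fun _ => 1) = 0)
    (D : Matrix (Fin N) (Fin N) ℝ) (hD : D = (1/2 : ℝ) • (Dp + Dm))
    (η : ℝ → Fin N → ℝ) (hη : Differentiable ℝ η)
    (hode : ∀ t : ℝ, deriv η t =
      -(1/3 : ℝ) • (D.mulVec (η t * η t) + η t * D.mulVec (η t))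
        - (Dp * D * Dm).mulVec (η t)) :
    (∀ t₁ t₂ : ℝ,
      (fun _ => (1:ℝ)) ⬝ᵥ M.mulVec (η t₁) = (fun _ => (1:ℝ)) ⬝ᵥ M.mulVec (η t₂)) ∧
    (∀ t₁ t₂ : ℝ,
      (1/2 : ℝ) * (η t₁ ⬝ᵥ M.mulVec (η t₁)) = (1/2 : ℝ) * (η t₂ ⬝ᵥ M.mulVec (η t₂))) := by
  rw [← Pi.one_def] at hDp1 hDm1
  have hMD : (M * D)ᵀ = -(M * D) := hD ▸ transpose_mul_half_smul_add_eq_neg hMdiag.isSymm hSBP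
  have hD1 : D *ᵥ 1 = 0 := by
    rw [hD, smul_mulVec, add_mulVec, hDp1, hDm1, add_zero, smul_zero]
  have hMDp : M * Dp = -(Dmᵀ * M) := eq_neg_of_add_eq_zero_left hSBP
  have h1MDp : 1 ᵥ* (M * Dp) = 0 := by
    rw [hMDp, vecMul_neg, ← vecMul_vecMul, vecMul_transpose, hDm1, zero_vecMul, neg_zero]
  have hη' (t : ℝ) : HasDerivAt η (kdvRHS D Dp Dm (η t)) t :=
    (hη t).hasDerivAt.congr_deriv (hode t)
  have hmass (t : ℝ) : HasDerivAt (fun s => 1 ⬝ᵥ M *ᵥ η s) 0 t := by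
    simpa [one_dotProduct_mulVec_kdvRHS hMdiag hMD hD1 h1MDp] using
      (hasDerivAt_const t 1).dotProduct ((hη' t).mulVec M)
  have henergy (t : ℝ) : HasDerivAt (fun s => (1/2 : ℝ) * (η s ⬝ᵥ M *ᵥ η s)) 0 t := by
    simpa [Matrix.IsSymm.dotProduct_mulVec_comm hMdiag.isSymm _ (η t),
      dotProduct_mulVec_kdvRHS_self hMdiag hMD hMDp] using
      ((hη' t).dotProduct ((hη' t).mulVec M)).const_mul (1/2 : ℝ)
  exact ⟨is_const_of_deriv_eq_zero (fun t => (hmass t).differentiableAt) fun t => (hmass t).deriv,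
    is_const_of_deriv_eq_zero (fun t => (henergy t).differentiableAt) fun t => (henergy t).deriv⟩

/-- The split-form upwind SBP semidiscretization of KdV,
`η′ = −(1/3)(D(η∘η) + η∘(Dη)) − D₊DD₋η`, conserves the discrete mass `𝟙ᵀMη` and the
discrete energy `(1/2)ηᵀMη` for diagonal-norm consistent periodic upwind SBP
operators. -/
theorem kdv_semidiscretization_invariants (N : ℕ)
    (M Dp Dm : Matrix (Fin N) (Fin N) ℝ)
    (hMdiag : M.IsDiag) (hMpos : ∀ i, 0 < M i i)
    (hSBP : M * Dp + Dm.transpose * M = 0)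
    (hDp1 : Dp.mulVec (fun _ => 1) = 0) (hDm1 : Dm.mulVec (fun _ => 1) = 0)
    (D : Matrix (Fin N) (Fin N) ℝ) (hD : D = (1/2 : ℝ) • (Dp + Dm))
    (η : ℝ → Fin N → ℝ) (hη : Differentiable ℝ η)
    (hode : ∀ t : ℝ, deriv η t =
      -(1/3 : ℝ) • (D.mulVec (η t * η t) + η t * D.mulVec (η t))
        - (Dp * D * Dm).mulVec (η t)) :
    (∀ t₁ t₂ : ℝ,
      (fun _ => (1:ℝ)) ⬝ᵥ M.mulVec (η t₁) = (fun _ => (1:ℝ)) ⬝ᵥ M.mulVec (η t₂)) ∧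
    (∀ t₁ t₂ : ℝ,
      (1/2 : ℝ) * (η t₁ ⬝ᵥ M.mulVec (η t₁)) = (1/2 : ℝ) * (η t₂ ⬝ᵥ M.mulVec (η t₂))) :=
  kdv_semidiscretization_invariants_general N M Dp Dm hMdiag hSBP hDp1 hDm1 D hD η hη hode
end

section
/- Let N, s ∈ ℕ, Δt > 0, and let D, D₊, D₋ ∈ ℝ^{N×N}. Let Ã, A ∈ ℝ^{s×s} and b̃, b ∈ ℝ^s be ImEx Butcher data with A invertible (a type I method). Define f : ℝ^N → ℝ^N by f(u) = −(1/3)(D(u∘u) + u∘(Du)), where ∘ is the entrywise product. Fix uⁿ, vⁿ, wⁿ ∈ ℝ^N, and for each τ > 0 let stage vectors Uᵢ(τ), Vᵢ(τ), Wᵢ(τ) ∈ ℝ^N (i = 1, …, s) satisfy: Uᵢ(τ) = uⁿ + Δt·Σⱼ ãᵢⱼ f(Uⱼ(τ)) − Δt·Σⱼ aᵢⱼ D₊Wⱼ(τ); Vᵢ(τ) = vⁿ + (Δt/τ)·Σⱼ aᵢⱼ (DVⱼ(τ) − Wⱼ(τ)); Wᵢ(τ) = wⁿ + (Δt/τ)·Σⱼ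 aᵢⱼ (Vⱼ(τ) − D₋Uⱼ(τ)). Assume that as τ → 0⁺, Uᵢ(τ) → Uᵢ⁰, Vᵢ(τ) → Vᵢ⁰, and Wᵢ(τ) → Wᵢ⁰ for each i. Then: (1) Vⱼ⁰ = D₋Uⱼ⁰ and Wⱼ⁰ = D Vⱼ⁰ for all j; (2) Uᵢ⁰ = uⁿ + Δt·Σⱼ ãᵢⱼ f(Uⱼ⁰) − Δt·Σⱼ aᵢⱼ D₊DD₋Uⱼ⁰ for all i; and (3) the update uⁿ⁺¹(τ) = uⁿ + Δt·Σⱼ b̃ⱼ f(Uⱼ(τ)) − Δt·Σⱼ bⱼ D₊Wⱼ(τ) converges, as τ → 0⁺, to uⁿ + Δt·Σⱼ b̃ⱼ f(Uⱼ⁰) − Δt·Σⱼ bⱼ D₊DD₋Uⱼ⁰, i.e., to the update of the same ImEx Runge–Kutta method applied to the semidiscrete KdV equation ∂ₜη = f(η) − D₊DD₋η with f treated explicitly and −D₊DD₋η implicitly. Hence the scheme is asymptotic-preserving for the u-component. -/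
/-!
Multiplying the `v`- and `w`-stage equations by `τ / Δt` shows that `A` applied to the stage
residuals `D Vⱼ - Wⱼ` and `Vⱼ - D₋ Uⱼ` tends to zero as `τ → 0⁺`; since `A` is invertible, the
limiting residuals vanish. Hence `D₊ Wⱼ → D₊ D D₋ Uⱼ⁰`, and the `u`-stage equations and the
update pass to the limit by continuity of `f`.
-/

open Filter Matrix Topology

theorem Matrix.eq_zero_of_isUnit_of_sum_smul_eq_zero {ι R M : Type*} [Fintype ι] [DecidableEq ι]
    [CommRing R] [AddCommGroup M] [Module R M] {A : Matrix ι ι R} (hA : IsUnit A)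
    {x : ι → M} (h : ∀ i, ∑ j, A i j • x j = 0) : x = 0 := by
  have hinv : A⁻¹ * A = 1 := A.nonsing_inv_mul ((A.isUnit_iff_isUnit_det).mp hA)
  funext k
  calc x k = ∑ j, (A⁻¹ * A) k j • x j := by simp [hinv, one_apply]
    _ = ∑ i, A⁻¹ k i • ∑ j, A i j • x j := by
        simp only [mul_apply, Finset.sum_smul, Finset.smul_sum, smul_smul]
        exact Finset.sum_comm
    _ = 0 := by simp [h]

theorem eq_zero_of_stiff_relaxation {E : Type*} [AddCommGroup E] [Module ℝ E] [TopologicalSpace E]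
    [IsTopologicalAddGroup E] [ContinuousSMul ℝ E] [T2Space E] {κ : ℝ} (hκ : κ ≠ 0)
    {y r : ℝ → E} {c y₀ r₀ : E}
    (h : ∀ τ, 0 < τ → y τ = c + (κ / τ) • r τ)
    (hy : Tendsto y (𝓝[>] 0) (𝓝 y₀)) (hr : Tendsto r (𝓝[>] 0) (𝓝 r₀)) : r₀ = 0 := by
  have hr_eq : ∀ᶠ τ in 𝓝[>] 0, (τ / κ) • (y τ - c) = r τ := by
    filter_upwards [self_mem_nhdsWithin] with τ hτ
    rw [h τ hτ, add_sub_cancel_left, smul_smul, div_mul_div_cancel₀ hκ,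
      div_self (ne_of_gt hτ), one_smul]
  have hscale : Tendsto (fun τ : ℝ => τ / κ) (𝓝[>] 0) (𝓝 0) := by
    simpa using ((continuous_id.div_const κ).tendsto 0).mono_left nhdsWithin_le_nhds
  have hr_zero : Tendsto r (𝓝[>] 0) (𝓝 0) := by
    simpa using (hscale.smul (hy.sub_const c)).congr' hr_eq
  exact tendsto_nhds_unique hr hr_zero
theorem tendsto_rk_combination {α ι E : Type*} [Fintype ι] [AddCommGroup E] [Module ℝ E]
    [TopologicalSpace E] [IsTopologicalAddGroup E] [ContinuousSMul ℝ E] {l : Filter α}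
    (u : E) (Δt : ℝ) (c d : ι → ℝ) {F G : α → ι → E} {F₀ G₀ : ι → E}
    (hF : ∀ j, Tendsto (fun a => F a j) l (𝓝 (F₀ j)))
    (hG : ∀ j, Tendsto (fun a => G a j) l (𝓝 (G₀ j))) :
    Tendsto (fun a => u + Δt • ∑ j, c j • F a j - Δt • ∑ j, d j • G a j) l
      (𝓝 (u + Δt • ∑ j, c j • F₀ j - Δt • ∑ j, d j • G₀ j)) :=
  (((tendsto_finsetSum _ fun j _ => (hF j).const_smul (c j)).const_smul Δt).const_add u).sub
    ((tendsto_finsetSum _ fun j _ => (hG j).const_smul (d j)).const_smul Δt)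

/-- Asymptotic preservation of type I ImEx Runge–Kutta methods (invertible implicit
Butcher matrix `A`) applied to the split semidiscrete KdVH system: in the relaxation
limit `τ → 0⁺`, the stage limits satisfy `V⁰ = D₋U⁰`, `W⁰ = DV⁰`, the limit stages
solve the same ImEx method applied to the semidiscrete KdV equation
`∂ₜη = f(η) − D₊DD₋η`, and the `u`-update converges to the corresponding KdV update. -/
theorem imex_typeI_asymptotic_preserving (N s : ℕ) (Δt : ℝ) (hΔt : 0 < Δt)
    (D Dp Dm : Matrix (Fin N) (Fin N) ℝ)
    (Ae A : Matrix (Fin s) (Fin s) ℝ) (be b : Fin s → ℝ)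
    (hA : IsUnit A)
    (f : (Fin N → ℝ) → (Fin N → ℝ))
    (hf : ∀ u : Fin N → ℝ, f u = -(1/3 : ℝ) • (D.mulVec (u * u) + u * D.mulVec u))
    (un vn wn : Fin N → ℝ)
    (U V W : ℝ → Fin s → Fin N → ℝ)
    (U0 V0 W0 : Fin s → Fin N → ℝ)
    (hUeq : ∀ τ : ℝ, 0 < τ → ∀ i : Fin s,
      U τ i = un + Δt • (∑ j, Ae i j • f (U τ j))
        - Δt • (∑ j, A i j • Dp.mulVec (W τ j)))
    (hVeq : ∀ τ : ℝ, 0 < τ → ∀ i : Fin s,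
      V τ i = vn + (Δt / τ) • (∑ j, A i j • (D.mulVec (V τ j) - W τ j)))
    (hWeq : ∀ τ : ℝ, 0 < τ → ∀ i : Fin s,
      W τ i = wn + (Δt / τ) • (∑ j, A i j • (V τ j - Dm.mulVec (U τ j))))
    (hUlim : ∀ i, Tendsto (fun τ => U τ i) (nhdsWithin 0 (Set.Ioi 0)) (nhds (U0 i)))
    (hVlim : ∀ i, Tendsto (fun τ => V τ i) (nhdsWithin 0 (Set.Ioi 0)) (nhds (V0 i)))
    (hWlim : ∀ i, Tendsto (fun τ => W τ i) (nhdsWithin 0 (Set.Ioi 0)) (nhds (W0 i))) :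
    (∀ j, V0 j = Dm.mulVec (U0 j) ∧ W0 j = D.mulVec (V0 j)) ∧
    (∀ i, U0 i = un + Δt • (∑ j, Ae i j • f (U0 j))
      - Δt • (∑ j, A i j • (Dp * D * Dm).mulVec (U0 j))) ∧
    Tendsto
      (fun τ => un + Δt • (∑ j, be j • f (U τ j))
        - Δt • (∑ j, b j • Dp.mulVec (W τ j)))
      (nhdsWithin 0 (Set.Ioi 0))
      (nhds (un + Δt • (∑ j, be j • f (U0 j))
        - Δt • (∑ j, b j • (Dp * D * Dm).mulVec (U0 j)))) := by
  have hmulVec (M : Matrix (Fin N) (Fin N) ℝ) : Continuous (M *ᵥ ·) :=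
    continuous_const.matrix_mulVec continuous_id
  have hfc : Continuous f := by
    rw [show f = _ from funext hf]
    fun_prop
  have hVW : ∀ j, D *ᵥ V0 j - W0 j = 0 := congrFun <|
    Matrix.eq_zero_of_isUnit_of_sum_smul_eq_zero hA fun i =>
      eq_zero_of_stiff_relaxation hΔt.ne' (fun τ hτ => hVeq τ hτ i) (hVlim i) <|
        tendsto_finsetSum _ fun j _ =>
          ((((hmulVec D).tendsto _).comp (hVlim j)).sub (hWlim j)).const_smul _
  have hUV : ∀ j, V0 j - Dm *ᵥ U0 j = 0 := congrFun <|
    Matrix.eq_zero_of_isUnit_of_sum_smul_eq_zero hA fun i =>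
      eq_zero_of_stiff_relaxation hΔt.ne' (fun τ hτ => hWeq τ hτ i) (hWlim i) <|
        tendsto_finsetSum _ fun j _ =>
          ((hVlim j).sub (((hmulVec Dm).tendsto _).comp (hUlim j))).const_smul _
  have hV0 j : V0 j = Dm *ᵥ U0 j := sub_eq_zero.mp (hUV j)
  have hW0 j : W0 j = D *ᵥ V0 j := (sub_eq_zero.mp (hVW j)).symm
  have hDpW j : Tendsto (fun τ => Dp *ᵥ W τ j) (𝓝[>] 0) (𝓝 ((Dp * D * Dm) *ᵥ U0 j)) := by
    simpa only [hW0, hV0, mulVec_mulVec, Matrix.mul_assoc, Function.comp_def] using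
      ((hmulVec Dp).tendsto _).comp (hWlim j)
  have hfU j : Tendsto (fun τ => f (U τ j)) (𝓝[>] 0) (𝓝 (f (U0 j))) :=
    (hfc.tendsto _).comp (hUlim j)
  refine ⟨fun j => ⟨hV0 j, hW0 j⟩, fun i => ?_, tendsto_rk_combination un Δt be b hfU hDpW⟩
  refine tendsto_nhds_unique ((hUlim i).congr' ?_) (tendsto_rk_combination un Δt _ _ hfU hDpW)
  filter_upwards [self_mem_nhdsWithin] with τ hτ
  exact hUeq τ hτ i
end

section
/- Under the hypotheses of the asymptotic-preservation result for type I ImEx Runge–Kutta methods applied to the split semidiscrete KdVH system (A ∈ ℝ^{s×s} invertible; stage equations Uᵢ(τ) = uⁿ + Δt·Σⱼ ãᵢⱼ f(Uⱼ(τ)) − Δt·Σⱼ aᵢⱼ D₊Wⱼ(τ), Vᵢ(τ) = vⁿ + (Δt/τ)·Σⱼ aᵢⱼ (DVⱼ(τ) − Wⱼ(τ)), Wᵢ(τ) = wⁿ + (Δt/τ)·Σⱼ aᵢⱼ (Vⱼ(τ) − D₋Uⱼ(τ)); stage limits Uᵢ(τ) → Uᵢ⁰, Vᵢ(τ) → Vᵢ⁰,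 Wᵢ(τ) → Wᵢ⁰ as τ → 0⁺), assume additionally that the method is globally stiffly accurate: ã_{sj} = b̃ⱼ and a_{sj} = bⱼ for all j = 1, …, s. Then for every τ > 0 the updates vⁿ⁺¹(τ) = vⁿ + (Δt/τ)·Σⱼ bⱼ(DVⱼ(τ) − Wⱼ(τ)) and wⁿ⁺¹(τ) = wⁿ + (Δt/τ)·Σⱼ bⱼ(Vⱼ(τ) − D₋Uⱼ(τ)) satisfy vⁿ⁺¹(τ) = V_s(τ) and wⁿ⁺¹(τ) = W_s(τ), and consequently, as τ → 0⁺, vⁿ⁺¹(τ) → D₋U_s⁰ and wⁿ⁺¹(τ) → D D₋ U_s⁰, where U_s⁰ equals the limit of the u-update uⁿ⁺¹(τ). Hence the method is asymptotic-preserving for the auxiliary components v and w. -/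
/-!
Multiplying a stiff stage equation `yᵢ = z + (c/τ) Σⱼ aᵢⱼ rⱼ` by `τ/c` and letting `τ → 0⁺`
shows that `A` annihilates the limits of the residuals `rⱼ`; as `A` is invertible, those limits
vanish, which gives `V⁰ = D₋U⁰` and `W⁰ = DV⁰`. Global stiff accuracy makes the last rows of
`Ã` and `A` equal to the weights, so each update is the last stage and inherits its limit.
-/

open Filter Matrix Topology

theorem Matrix.eq_zero_of_sum_smul_eq_zero {ι R M : Type*} [Fintype ι] [DecidableEq ι]
    [CommRing R] [AddCommGroup M] [Module R M] {A : Matrix ι ι R} (hA : IsUnit A)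
    {x : ι → M} (hx : ∀ i, ∑ j, A i j • x j = 0) : x = 0 := by
  funext k
  calc x k = ∑ j, (A⁻¹ * A) k j • x j := by
        simp [Matrix.nonsing_inv_mul A ((Matrix.isUnit_iff_isUnit_det A).mp hA), one_apply]
    _ = ∑ i, A⁻¹ k i • ∑ j, A i j • x j := by
        simp only [mul_apply, Finset.sum_smul, Finset.smul_sum, smul_smul]
        exact Finset.sum_comm
    _ = 0 := by simp [hx]

theorem tendsto_zero_of_eq_add_div_smul {M : Type*} [AddCommGroup M] [Module ℝ M]
    [TopologicalSpace M] [IsTopologicalAddGroup M] [ContinuousSMul ℝ M]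
    {c : ℝ} (hc : c ≠ 0) {z y₀ : M} {y r : ℝ → M}
    (hy : ∀ τ, 0 < τ → y τ = z + (c / τ) • r τ) (hlim : Tendsto y (𝓝[>] 0) (𝓝 y₀)) :
    Tendsto r (𝓝[>] 0) (𝓝 0) := by
  have hr : ∀ᶠ τ in 𝓝[>] 0, (τ / c) • (y τ - z) = r τ := by
    filter_upwards [self_mem_nhdsWithin] with τ (hτ : 0 < τ)
    rw [hy τ hτ, add_sub_cancel_left, smul_smul, div_mul_div_cancel₀ hc, div_self hτ.ne', one_smul]
  have hscale : Tendsto (fun τ : ℝ => τ / c) (𝓝[>] 0) (𝓝 0) := by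
    simpa using (tendsto_id.div_const c).mono_left (nhdsWithin_le_nhds (a := (0:ℝ)))
  simpa using (hscale.smul (hlim.sub_const z)).congr' hr

theorem eq_zero_of_tendsto_stiff_stages {ι M : Type*} [Fintype ι] [DecidableEq ι]
    [AddCommGroup M] [Module ℝ M] [TopologicalSpace M] [IsTopologicalAddGroup M]
    [ContinuousSMul ℝ M] [T2Space M] {A : Matrix ι ι ℝ} (hA : IsUnit A) {c : ℝ} (hc : c ≠ 0)
    {z : M} {y r : ℝ → ι → M} {y₀ r₀ : ι → M}
    (hy : ∀ τ, 0 < τ → ∀ i, y τ i = z + (c / τ) • ∑ j, A i j • r τ j)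
    (hylim : ∀ i, Tendsto (fun τ => y τ i) (𝓝[>] 0) (𝓝 (y₀ i)))
    (hrlim : ∀ j, Tendsto (fun τ => r τ j) (𝓝[>] 0) (𝓝 (r₀ j))) : r₀ = 0 := by
  refine Matrix.eq_zero_of_sum_smul_eq_zero hA fun i => tendsto_nhds_unique ?_
    (tendsto_zero_of_eq_add_div_smul hc (fun τ hτ => hy τ hτ i) (hylim i))
  exact tendsto_finsetSum _ fun j _ => (hrlim j).const_smul _

/-- Asymptotic preservation of globally stiffly accurate type I ImEx Runge–Kutta
methods for the auxiliary components of the split semidiscrete KdVH system: under the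
GSA property the auxiliary updates equal the last stages, `vⁿ⁺¹(τ) = V_s(τ)` and
`wⁿ⁺¹(τ) = W_s(τ)`, and as `τ → 0⁺` they converge to `D₋U_s⁰` and `DD₋U_s⁰`
respectively, where `U_s⁰` is the limit of the `u`-update. -/
theorem imex_typeI_gsa_asymptotic_preserving_aux (N s : ℕ) (hs : 0 < s)
    (Δt : ℝ) (hΔt : 0 < Δt)
    (D Dp Dm : Matrix (Fin N) (Fin N) ℝ)
    (Ae A : Matrix (Fin s) (Fin s) ℝ) (be b : Fin s → ℝ)
    (hA : IsUnit A)
    (hGSA : ∀ j : Fin s, Ae ⟨s - 1, by omega⟩ j = be j ∧ A ⟨s - 1, by omega⟩ j = b j)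
    (f : (Fin N → ℝ) → (Fin N → ℝ))
    (un vn wn : Fin N → ℝ)
    (U V W : ℝ → Fin s → Fin N → ℝ)
    (U0 V0 W0 : Fin s → Fin N → ℝ)
    (hUeq : ∀ τ : ℝ, 0 < τ → ∀ i : Fin s,
      U τ i = un + Δt • (∑ j, Ae i j • f (U τ j))
        - Δt • (∑ j, A i j • Dp.mulVec (W τ j)))
    (hVeq : ∀ τ : ℝ, 0 < τ → ∀ i : Fin s,
      V τ i = vn + (Δt / τ) • (∑ j, A i j • (D.mulVec (V τ j) - W τ j)))
    (hWeq : ∀ τ : ℝ, 0 < τ → ∀ i : Fin s,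
      W τ i = wn + (Δt / τ) • (∑ j, A i j • (V τ j - Dm.mulVec (U τ j))))
    (hUlim : ∀ i, Tendsto (fun τ => U τ i) (nhdsWithin 0 (Set.Ioi 0)) (nhds (U0 i)))
    (hVlim : ∀ i, Tendsto (fun τ => V τ i) (nhdsWithin 0 (Set.Ioi 0)) (nhds (V0 i)))
    (hWlim : ∀ i, Tendsto (fun τ => W τ i) (nhdsWithin 0 (Set.Ioi 0)) (nhds (W0 i))) :
    (∀ τ : ℝ, 0 < τ →
      vn + (Δt / τ) • (∑ j, b j • (D.mulVec (V τ j) - W τ j)) = V τ ⟨s - 1, by omega⟩ ∧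
      wn + (Δt / τ) • (∑ j, b j • (V τ j - Dm.mulVec (U τ j))) = W τ ⟨s - 1, by omega⟩) ∧
    Tendsto (fun τ => vn + (Δt / τ) • (∑ j, b j • (D.mulVec (V τ j) - W τ j)))
      (nhdsWithin 0 (Set.Ioi 0)) (nhds (Dm.mulVec (U0 ⟨s - 1, by omega⟩))) ∧
    Tendsto (fun τ => wn + (Δt / τ) • (∑ j, b j • (V τ j - Dm.mulVec (U τ j))))
      (nhdsWithin 0 (Set.Ioi 0)) (nhds (D.mulVec (Dm.mulVec (U0 ⟨s - 1, by omega⟩)))) ∧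
    Tendsto
      (fun τ => un + Δt • (∑ j, be j • f (U τ j)) - Δt • (∑ j, b j • Dp.mulVec (W τ j)))
      (nhdsWithin 0 (Set.Ioi 0)) (nhds (U0 ⟨s - 1, by omega⟩)) := by
  set L : Fin s := ⟨s - 1, by omega⟩
  have hbe : ∀ j, Ae L j = be j := fun j => (hGSA j).1
  have hb : ∀ j, A L j = b j := fun j => (hGSA j).2
  have hv_last : ∀ τ, 0 < τ → vn + (Δt / τ) • ∑ j, b j • (D *ᵥ V τ j - W τ j) = V τ L :=
    fun τ hτ => by simp only [hVeq τ hτ L, hb]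
  have hw_last : ∀ τ, 0 < τ → wn + (Δt / τ) • ∑ j, b j • (V τ j - Dm *ᵥ U τ j) = W τ L :=
    fun τ hτ => by simp only [hWeq τ hτ L, hb]
  have hu_last : ∀ τ, 0 < τ →
      un + Δt • ∑ j, be j • f (U τ j) - Δt • ∑ j, b j • Dp *ᵥ W τ j = U τ L :=
    fun τ hτ => by simp only [hUeq τ hτ L, hbe, hb]
  have hcont : ∀ M : Matrix (Fin N) (Fin N) ℝ, Continuous (M *ᵥ ·) :=
    fun M => continuous_const.matrix_mulVec continuous_id
  have hV0 : V0 L = Dm *ᵥ U0 L := by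
    have hres := eq_zero_of_tendsto_stiff_stages hA hΔt.ne' hWeq hWlim fun j =>
      (hVlim j).sub ((hcont Dm).tendsto _ |>.comp (hUlim j))
    exact sub_eq_zero.mp (congrFun hres L)
  have hW0 : W0 L = D *ᵥ V0 L := by
    have hres := eq_zero_of_tendsto_stiff_stages hA hΔt.ne' hVeq hVlim fun j =>
      ((hcont D).tendsto _ |>.comp (hVlim j)).sub (hWlim j)
    exact (sub_eq_zero.mp (congrFun hres L)).symm
  have hpos : ∀ᶠ τ in 𝓝[>] (0 : ℝ), 0 < τ := self_mem_nhdsWithin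
  refine ⟨fun τ hτ => ⟨hv_last τ hτ, hw_last τ hτ⟩, ?_, ?_, ?_⟩
  · rw [← hV0]
    exact (hVlim L).congr' (hpos.mono fun τ hτ => (hv_last τ hτ).symm)
  · rw [← hV0, ← hW0]
    exact (hWlim L).congr' (hpos.mono fun τ hτ => (hw_last τ hτ).symm)
  · exact (hUlim L).congr' (hpos.mono fun τ hτ => (hu_last τ hτ).symm)
end
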